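/- Let g : {0,1}^b × {0,1}^b → {0,1} be the inner product function g(u,v) = ⊕_{i=1}^b (u_i·v_i). Then for every combinatorial rectangle R = S×T ⊆ {0,1}^b × {0,1}^b, the discrepancy disc_R(g) = |Pr[(U,V)∈R, g(U,V)=0] − Pr[(U,V)∈R, g(U,V)=1]| ≤ 2^{−b/2}, where U, V are independent uniform on {0,1}^b. -/

import Mathlib

/-!
Up to the factor `4^{-b}`, the discrepancy is `|sᵀ H t|` for the ±1 matrix
`H u w = (-1)^{⟨u, w⟩}` and the indicator vectors `s, t` of `S, T`. The rows of `H` are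
orthogonal of squared length `2^b`, because `∑_w (-1)^{⟨z, w⟩}` factors over the coordinates
and vanishes unless `z = 0`. Cauchy–Schwarz then gives `|sᵀ H t|² ≤ 2^b |S| |T| ≤ 2^{3b}`.
-/

/-- `Pr[(U,V) ∈ S×T ∧ IP(U,V) = v]` for independent uniform `U, V ∈ {0,1}^b`, where
`IP(u,w) = ⊕_i u_i·w_i` is the inner product function. -/
noncomputable def prIPRect {b : ℕ} (S T : Finset (Fin b → Bool)) (v : ZMod 2) : ℝ :=
  (∑ u : Fin b → Bool, ∑ w : Fin b → Bool,
      if u ∈ S ∧ w ∈ T ∧ (∑ i, if u i && w i then (1 : ZMod 2) else 0) = v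
      then (1 : ℝ) else 0)
    / (2 ^ b * 2 ^ b)

open Finset

theorem AddChar.map_sum_eq_prod {A M ι : Type*} [AddCommMonoid A] [CommMonoid M]
    (ψ : AddChar A M) (s : Finset ι) (f : ι → A) : ψ (∑ i ∈ s, f i) = ∏ i ∈ s, ψ (f i) := by
  have := map_prod ψ.toMonoidHom (fun i => Multiplicative.ofAdd (f i)) s
  rwa [← ofAdd_sum] at this

theorem sq_sum_sum_le_of_orthogonal {α β : Type*} [Fintype β] [DecidableEq α]
    (f : α → β → ℝ) (c : ℝ) (hf : ∀ u u', ∑ w, f u w * f u' w = if u = u' then c else 0)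
    (S : Finset α) (T : Finset β) :
    (∑ u ∈ S, ∑ w ∈ T, f u w) ^ 2 ≤ c * #S * #T := by
  have hrows : ∑ w, (∑ u ∈ S, f u w) ^ 2 = c * #S := by
    simp_rw [sq, sum_mul_sum]
    rw [sum_comm]
    simp_rw [sum_comm (s := univ) (t := S), hf]
    simp [mul_comm]
  calc (∑ u ∈ S, ∑ w ∈ T, f u w) ^ 2 = (∑ w ∈ T, ∑ u ∈ S, f u w) ^ 2 := by rw [sum_comm]
    _ ≤ #T * ∑ w ∈ T, (∑ u ∈ S, f u w) ^ 2 := sq_sum_le_card_mul_sum_sq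
    _ ≤ #T * ∑ w, (∑ u ∈ S, f u w) ^ 2 := by gcongr; exact subset_univ T
    _ = c * #S * #T := by rw [hrows, mul_comm]

namespace BoolInner

noncomputable def signChar : AddChar (ZMod 2) ℝ :=
  AddChar.zmodChar 2 (by norm_num : (-1 : ℝ) ^ 2 = 1)

theorem signChar_one : signChar 1 = -1 := by
  simp [signChar, AddChar.zmodChar_apply, ZMod.val_one]

theorem indicator_zero_sub_indicator_one (x : ZMod 2) :
    ((if x = 0 then 1 else 0) - if x = 1 then 1 else 0 : ℝ) = signChar x := by
  obtain rfl | rfl : x = 0 ∨ x = 1 := by revert x; decide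
  · simp
  · simp [signChar_one]

variable {ι : Type*} [Fintype ι]

def innerMod2 (u w : ι → Bool) : ZMod 2 := ∑ i, if u i && w i then 1 else 0

theorem innerMod2_add_innerMod2 (u u' w : ι → Bool) :
    innerMod2 u w + innerMod2 u' w = innerMod2 (fun i => xor (u i) (u' i)) w := by
  have hterm : ∀ a a' c : Bool, ((if a && c then 1 else 0) + (if a' && c then 1 else 0) : ZMod 2)
      = if xor a a' && c then 1 else 0 := by decide
  simp only [innerMod2, ← sum_add_distrib, hterm]

theorem sum_signChar_innerMod2 [DecidableEq ι] (z : ι → Bool) :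
    ∑ w, signChar (innerMod2 z w) = if ∀ i, z i = false then (2 : ℝ) ^ Fintype.card ι else 0 := by
  have hfactor (i : ι) :
      ∑ c : Bool, signChar (if z i && c then 1 else 0) = if z i = false then 2 else 0 := by
    cases z i <;> simp [signChar_one]
  calc ∑ w, signChar (innerMod2 z w) = ∏ i, ∑ c : Bool, signChar (if z i && c then 1 else 0) := by
        simp_rw [innerMod2, AddChar.map_sum_eq_prod]
        exact (Fintype.prod_sum fun i (c : Bool) => signChar (if z i && c then 1 else 0)).symm
    _ = _ := by simp_rw [hfactor, Fintype.prod_ite_zero]; simp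

theorem sum_signChar_innerMod2_mul [DecidableEq ι] (u u' : ι → Bool) :
    ∑ w, signChar (innerMod2 u w) * signChar (innerMod2 u' w) =
      if u = u' then (2 : ℝ) ^ Fintype.card ι else 0 := by
  simp_rw [← AddChar.map_add_eq_mul, innerMod2_add_innerMod2, sum_signChar_innerMod2,
    bne_eq_false_iff_eq, ← funext_iff]

theorem card_le_two_pow (S : Finset (ι → Bool)) : (#S : ℝ) ≤ 2 ^ Fintype.card ι := by
  classical
  exact_mod_cast (card_le_univ S).trans_eq (by simp)

end BoolInner

open BoolInner

theorem prIPRect_zero_sub_one {b : ℕ} (S T : Finset (Fin b → Bool)) :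
    prIPRect S T 0 - prIPRect S T 1 =
      (∑ u ∈ S, ∑ w ∈ T, signChar (innerMod2 u w)) / (2 ^ b * 2 ^ b) := by
  simp only [prIPRect, ← sub_div, ← sum_sub_distrib]
  congr 1
  have hterm (u w : Fin b → Bool) (x : ZMod 2) :
      ((if u ∈ S ∧ w ∈ T ∧ x = 0 then 1 else 0) - if u ∈ S ∧ w ∈ T ∧ x = 1 then 1 else 0 : ℝ) =
        if u ∈ S then if w ∈ T then signChar x else 0 else 0 := by
    rw [← indicator_zero_sub_indicator_one]
    by_cases hu : u ∈ S <;> by_cases hw : w ∈ T <;> simp [hu, hw]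
  simp_rw [innerMod2, hterm, sum_ite_irrel, sum_const_zero, sum_ite_mem, univ_inter]

theorem stmt11 {b : ℕ} (S T : Finset (Fin b → Bool)) :
    |prIPRect S T 0 - prIPRect S T 1| ≤ (2 : ℝ) ^ (-(b : ℝ) / 2) := by
  rw [prIPRect_zero_sub_one]
  set A := ∑ u ∈ S, ∑ w ∈ T, signChar (innerMod2 u w)
  have hA : A ^ 2 ≤ ((2 : ℝ) ^ b) ^ 3 := by
    have hCS := sq_sum_sum_le_of_orthogonal _ _ sum_signChar_innerMod2_mul S T
    have hS := card_le_two_pow S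
    have hT := card_le_two_pow T
    simp only [Fintype.card_fin] at hCS hS hT
    calc A ^ 2 ≤ 2 ^ b * #S * #T := hCS
      _ ≤ 2 ^ b * 2 ^ b * 2 ^ b := by gcongr
      _ = _ := by ring
  refine abs_le_of_sq_le_sq ?_ (by positivity)
  calc (A / (2 ^ b * 2 ^ b)) ^ 2 = A ^ 2 / ((2 : ℝ) ^ b) ^ 4 := by ring
    _ ≤ ((2 : ℝ) ^ b) ^ 3 / ((2 : ℝ) ^ b) ^ 4 := by gcongr
    _ = ((2 : ℝ) ^ (-(b : ℝ) / 2)) ^ 2 := by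
      rw [← Real.rpow_mul_natCast (by norm_num), Nat.cast_ofNat, div_mul_cancel₀ _ two_ne_zero,
        Real.rpow_neg (by norm_num), Real.rpow_natCast]
      field_simp
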